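/- arXiv:1811.01047 — 3 statements merged into one kernel-verified Lean document; each statement's English description precedes it below -/
import Mathlib

section
/- For each entry (i,j) ∈ ℕ × ℕ, one has (A₀(x)·A₂(y))_{i,j} = t·(A₂(y)·A₀(x))_{i,j} + (1−t)·(A₂(y))_{i,j} + xy(1−t)·(A₀(y))_{i,j}, where matrix products are well-defined entrywise since all matrices are banded (each row and column has at most two nonzero entries). -/
noncomputable def matMul {R : Type*} [CommRing R] (M N : ℕ → ℕ → R) : ℕ → ℕ → R :=
  fun i j => ∑ᶠ k, M i k * N k j

def A0 {R : Type*} [CommRing R] (x : R) : ℕ → ℕ → R :=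
  fun i j => if i = j then 1 else if i + 1 = j then x else 0

def A2 {R : Type*} [CommRing R] (t x : R) : ℕ → ℕ → R :=
  fun i j => if i = j then x ^ 2 else if i = j + 1 then x * (1 - t ^ i) else 0

/-
Both sides are banded, so each entry is a sum of at most two terms, read off from the rows of
`A0 x` and `A2 t y`. Comparing them entry by entry, the only real cancellation happens on the
diagonal, where the `x * y` terms match because `t * (1 - t ^ i) + (1 - t) = 1 - t ^ (i + 1)`.
-/

section MatMul

variable {R : Type*} [CommRing R]

lemma matMul_eq_sum_of_row_support {M : ℕ → ℕ → R} {i : ℕ} (s : Finset ℕ)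
    (hs : ∀ k ∉ s, M i k = 0) (N : ℕ → ℕ → R) (j : ℕ) :
    matMul M N i j = ∑ k ∈ s, M i k * N k j :=
  finsum_eq_sum_of_support_subset _ fun k hk => by
    by_contra hks
    exact hk (by simp only [hs k hks, zero_mul])

lemma matMul_A0_left (x : R) (N : ℕ → ℕ → R) (i j : ℕ) :
    matMul (A0 x) N i j = N i j + x * N (i + 1) j := by
  rw [matMul_eq_sum_of_row_support {i, i + 1} (fun k hk => by grind [A0]),
    Finset.sum_pair (by omega)]
  simp [A0]

lemma matMul_A2_left_zero (t y : R) (N : ℕ → ℕ → R) (j : ℕ) :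
    matMul (A2 t y) N 0 j = y ^ 2 * N 0 j := by
  rw [matMul_eq_sum_of_row_support {0} (fun k hk => by grind [A2]), Finset.sum_singleton]
  simp [A2]

lemma matMul_A2_left_succ (t y : R) (N : ℕ → ℕ → R) (n j : ℕ) :
    matMul (A2 t y) N (n + 1) j = y ^ 2 * N (n + 1) j + y * (1 - t ^ (n + 1)) * N n j := by
  rw [matMul_eq_sum_of_row_support {n + 1, n} (fun k hk => by grind [A2]),
    Finset.sum_pair (by omega)]
  simp [A2]

end MatMul

theorem stmt0 {R : Type*} [CommRing R] (t x y : R) (i j : ℕ) :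
    matMul (A0 x) (A2 t y) i j =
      t * matMul (A2 t y) (A0 x) i j + (1 - t) * A2 t y i j + x * y * (1 - t) * A0 y i j := by
  rw [matMul_A0_left]
  cases i with
  | zero =>
    rw [matMul_A2_left_zero]
    simp only [A0, A2]
    split_ifs <;> first | omega | ring
  | succ n =>
    rw [matMul_A2_left_succ]
    simp only [A0, A2]
    split_ifs <;> first | omega | ring
end

section
/- For each entry (i,j) ∈ ℕ × ℕ, one has (A₀(x)·A₁(y))_{i,j} = t·(A₁(y)·A₀(x))_{i,j} + (1−t)·(A₁(y))_{i,j}. -/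
def A1 {R : Type*} [CommRing R] (t x : R) : ℕ → ℕ → R :=
  fun i j => if i = j then x * t ^ i else 0

theorem stmt1 {R : Type*} [CommRing R] (t x y : R) (i j : ℕ) :
    matMul (A0 x) (A1 t y) i j =
      t * matMul (A1 t y) (A0 x) i j + (1 - t) * A1 t y i j := by
  have h1 : matMul (A0 x) (A1 t y) i j = A0 x i j * A1 t y j j := by
    apply finsum_eq_single
    intro k hk
    simp [A1, hk]
  have h2 : matMul (A1 t y) (A0 x) i j = A1 t y i i * A0 x i j := by
    apply finsum_eq_single
    intro k hk
    simp [A1, Ne.symm hk]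
  rw [h1, h2]
  rcases eq_or_ne i j with rfl | hij
  · simp [A0, A1]; ring
  · rcases eq_or_ne (i + 1) j with rfl | h2
    · simp [A0, A1, hij]; ring
    · simp [A0, A1, hij, h2]
end

section
/- Let W₁, …, Wₙ be matrices where each Wₘ is either A₂(xₘ) or A₁(xₘ), and suppose W_{h₁}, …, W_{h_ℓ} are the A₂'s (so there are r = n − ℓ matrices of type A₁). Then for every i ∈ ℕ, the (i,i) diagonal entry of the product W₁(x₁)⋯Wₙ(xₙ)·S equals qⁱ · t^{ri} · x₁⋯xₙ · ∏_{j=1}^{ℓ} x_{h_j}. -/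
def Smat {R : Type*} [CommRing R] (q : R) : ℕ → ℕ → R :=
  fun i j => if i = j then q ^ i else 0

open Finset

section LowerTriangular

variable {R : Type*} [CommRing R]

def IsLowerTriangular (M : ℕ → ℕ → R) : Prop :=
  ∀ ⦃i j : ℕ⦄, i < j → M i j = 0

theorem isLowerTriangular_A1 (t x : R) : IsLowerTriangular (A1 t x) := fun _ _ h => by
  simp [A1, h.ne]

theorem isLowerTriangular_A2 (t x : R) : IsLowerTriangular (A2 t x) := fun i j h => by
  simp [A2, h.ne, show i ≠ j + 1 by omega]

theorem isLowerTriangular_Smat (q : R) : IsLowerTriangular (Smat q) := fun _ _ h => by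
  simp [Smat, h.ne]

variable {M N : ℕ → ℕ → R}

theorem IsLowerTriangular.matMul (hM : IsLowerTriangular M) (hN : IsLowerTriangular N) :
    IsLowerTriangular (_root_.matMul M N) := fun i j h => by
  refine finsum_eq_zero_of_forall_eq_zero fun k => ?_
  rcases le_or_gt k i with hk | hk
  · rw [hN (hk.trans_lt h), mul_zero]
  · rw [hM hk, zero_mul]

theorem IsLowerTriangular.matMul_apply_self (hM : IsLowerTriangular M)
    (hN : IsLowerTriangular N) (i : ℕ) : _root_.matMul M N i i = M i i * N i i := by
  refine finsum_eq_single (fun k => M i k * N k i) i fun k hk => ?_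
  rcases lt_or_gt_of_ne hk with h | h
  · rw [hN h, mul_zero]
  · rw [hM h, zero_mul]

theorem isLowerTriangular_foldr_matMul {L : List (ℕ → ℕ → R)} {S : ℕ → ℕ → R}
    (hL : ∀ M ∈ L, IsLowerTriangular M) (hS : IsLowerTriangular S) :
    IsLowerTriangular (L.foldr matMul S) := by
  induction L with
  | nil => exact hS
  | cons A L ih =>
    simp only [List.forall_mem_cons] at hL
    exact hL.1.matMul (ih hL.2)

theorem foldr_matMul_apply_self {L : List (ℕ → ℕ → R)} {S : ℕ → ℕ → R}
    (hL : ∀ M ∈ L, IsLowerTriangular M) (hS : IsLowerTriangular S) (i : ℕ) :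
    L.foldr matMul S i i = (L.map fun M => M i i).prod * S i i := by
  induction L with
  | nil => simp
  | cons A L ih =>
    simp only [List.forall_mem_cons] at hL
    rw [List.foldr_cons, hL.1.matMul_apply_self (isLowerTriangular_foldr_matMul hL.2 hS),
      ih hL.2, List.map_cons, List.prod_cons, mul_assoc]

end LowerTriangular

theorem Finset.prod_ite_sq_mul_const {ι M : Type*} [Fintype ι] [CommMonoid M] (p : ι → Prop)
    [DecidablePred p] (x : ι → M) (c : M) :
    ∏ m, (if p m then x m ^ 2 else x m * c) =
      c ^ (Fintype.card ι - #{m | p m}) * (∏ m, x m) * ∏ m with p m, x m := by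
  have hcard : #{m | ¬p m} = Fintype.card ι - #{m | p m} := by
    rw [← card_univ, ← card_filter_add_card_filter_not (s := univ) p, Nat.add_sub_cancel_left]
  rw [prod_ite, prod_mul_distrib, prod_const, hcard,
    ← prod_filter_mul_prod_filter_not univ p]
  simp only [pow_two, prod_mul_distrib]
  ac_rfl

theorem stmt7 {R : Type*} [CommRing R] (q t : R) (n : ℕ) (x : Fin n → R)
    (isA2 : Fin n → Prop) [DecidablePred isA2] (W : Fin n → ℕ → ℕ → R)
    (hW : ∀ m, W m = if isA2 m then A2 t (x m) else A1 t (x m)) (i : ℕ) :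
    ((List.ofFn W).foldr matMul (Smat q)) i i =
      q ^ i * t ^ ((n - (Finset.univ.filter isA2).card) * i) * (∏ m, x m) *
        ∏ m ∈ Finset.univ.filter isA2, x m := by
  have hW_lower : ∀ M ∈ List.ofFn W, IsLowerTriangular M := by
    simp only [List.forall_mem_ofFn_iff, hW]
    intro m
    split
    · exact isLowerTriangular_A2 _ _
    · exact isLowerTriangular_A1 _ _
  have hW_diag : ∀ m, W m i i = if isA2 m then x m ^ 2 else x m * t ^ i := by
    intro m
    rw [hW m]
    split <;> simp [A1, A2]
  rw [foldr_matMul_apply_self hW_lower (isLowerTriangular_Smat q), List.map_ofFn,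
    List.prod_ofFn]
  simp only [Function.comp_def, hW_diag, prod_ite_sq_mul_const, Fintype.card_fin, Smat,
    if_true, pow_mul]
  ring
end
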